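/- Define q : [0,1] × [0,1] → ℝ by: for x ≤ 1/2, q(x, y) = 4·𝟙{y ≤ x} + 2·𝟙{x ≤ y ≤ 1 − x} + 𝟙{y ≥ 1 − x}; and for x ≥ 1/2, q(x, y) = 4·𝟙{y ≤ 1 − x} + 3·𝟙{1 − x ≤ y ≤ x} + 𝟙{y ≥ x}. Define g : [0,1] → ℝ by g(x) = 36(4 − 3x) / ((2 + x)³(3 − x)²). Then for every y ∈ [0, 1], ∫₀¹ q(x, y) g(x) dx = (2 + y) g(y). -/

import Mathlib

/-!
For fixed `y`, the function `x ↦ q(x, y)` is, away from the two points `x = y` and `x = 1 - y`,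
the step function `3 - 2·𝟙{x ≤ y} + 𝟙{x ≤ 1 - y}`, whatever the position of `y` relative to `1/2`.
Hence `∫₀¹ q(x, y) g(x) dx = 3 (G 1 - G 0) - 2 (G y - G 0) + (G (1 - y) - G 0)` for a primitive `G`
of `g`, which partial fractions give explicitly, and the claim becomes an identity of rational
functions of `y`.
-/

open Set

/-- The transition jump density `q(x, y)` of the gap process: for `x ≤ 1/2`,
`q(x, y) = 4·𝟙{y ≤ x} + 2·𝟙{x ≤ y ≤ 1 − x} + 𝟙{y ≥ 1 − x}`, and for `x ≥ 1/2`,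
`q(x, y) = 4·𝟙{y ≤ 1 − x} + 3·𝟙{1 − x ≤ y ≤ x} + 𝟙{y ≥ x}`. -/
noncomputable def jumpDensity (x y : ℝ) : ℝ :=
  if x ≤ 1 / 2 then
    4 * (if y ≤ x then 1 else 0) + 2 * (if x ≤ y ∧ y ≤ 1 - x then 1 else 0) +
      (if 1 - x ≤ y then 1 else 0)
  else
    4 * (if y ≤ 1 - x then 1 else 0) + 3 * (if 1 - x ≤ y ∧ y ≤ x then 1 else 0) +
      (if x ≤ y then 1 else 0)

open MeasureTheory intervalIntegral
open scoped Interval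

lemma jumpDensity_mul_eq_indicator (f : ℝ → ℝ) {x y : ℝ} (hxy : x ≠ y) (hx : x ≠ 1 - y) :
    jumpDensity x y * f x =
      3 * f x - 2 * {x | x ≤ y}.indicator f x + {x | x ≤ 1 - y}.indicator f x := by
  simp only [jumpDensity, indicator, mem_ofPred_eq]
  have := hxy.lt_or_gt
  have := hx.lt_or_gt
  split_ifs <;> grind

lemma integral_jumpDensity_mul {f : ℝ → ℝ} (hf : IntervalIntegrable f volume 0 1) {y : ℝ}
    (hy : y ∈ Icc (0 : ℝ) 1) :
    ∫ x in (0 : ℝ)..1, jumpDensity x y * f x =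
      3 * (∫ x in (0 : ℝ)..1, f x) - 2 * (∫ x in (0 : ℝ)..y, f x) +
        ∫ x in (0 : ℝ)..(1 - y), f x := by
  have hind : ∀ c, IntervalIntegrable ({x | x ≤ c}.indicator f) volume 0 1 := fun c =>
    ⟨hf.1.indicator measurableSet_Iic, hf.2.indicator measurableSet_Iic⟩
  have hae : ∀ᵐ x, x ∈ Ι (0 : ℝ) 1 → jumpDensity x y * f x =
      3 * f x - 2 * {x | x ≤ y}.indicator f x + {x | x ≤ 1 - y}.indicator f x := by
    filter_upwards [Measure.ae_ne volume y, Measure.ae_ne volume (1 - y)] with x hxy hx _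
    exact jumpDensity_mul_eq_indicator f hxy hx
  rw [integral_congr_ae hae, integral_add ((hf.const_mul 3).sub ((hind y).const_mul 2)) (hind _),
    integral_sub (hf.const_mul 3) ((hind y).const_mul 2), intervalIntegral.integral_const_mul,
    intervalIntegral.integral_const_mul,
    integral_indicator hy, integral_indicator ⟨sub_nonneg.2 hy.2, sub_le_self 1 hy.1⟩]

noncomputable def invariantDensity (x : ℝ) : ℝ := 36 * (4 - 3 * x) / ((2 + x) ^ 3 * (3 - x) ^ 2)

-- Partial fractions of `invariantDensity`.
noncomputable def invariantDensityPrimitive (x : ℝ) : ℝ :=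
  -36 / 25 * (2 + x)⁻¹ - 36 / 5 * ((2 + x) ^ 2)⁻¹ - 36 / 25 * (3 - x)⁻¹

lemma hasDerivAt_invariantDensityPrimitive {x : ℝ} (hx : x ∈ Ioo (-2 : ℝ) 3) :
    HasDerivAt invariantDensityPrimitive (invariantDensity x) x := by
  have h2 : 2 + x ≠ 0 := by linarith [hx.1]
  have h3 : 3 - x ≠ 0 := by linarith [hx.2]
  have hA : HasDerivAt (fun x => 2 + x) 1 x := (hasDerivAt_id x).const_add 2
  have hB : HasDerivAt (fun x => 3 - x) (-1) x := (hasDerivAt_id x).const_sub 3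
  refine ((((hA.inv h2).const_mul (-36 / 25)).sub
    (((hA.pow 2).inv (pow_ne_zero 2 h2)).const_mul (36 / 5))).sub
      ((hB.inv h3).const_mul (36 / 25))).congr_deriv ?_
  simp only [invariantDensity, Pi.pow_apply]
  field_simp
  ring

lemma continuousOn_invariantDensity : ContinuousOn invariantDensity (Ioo (-2) 3) := by
  refine ContinuousOn.div (by fun_prop) (by fun_prop) fun x hx => ?_
  have : 0 < 2 + x := by linarith [hx.1]
  have : 0 < 3 - x := by linarith [hx.2]
  positivity

lemma intervalIntegrable_invariantDensity {a b : ℝ} (ha : a ∈ Ioo (-2 : ℝ) 3)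
    (hb : b ∈ Ioo (-2 : ℝ) 3) : IntervalIntegrable invariantDensity volume a b :=
  (continuousOn_invariantDensity.mono (ordConnected_Ioo.uIcc_subset ha hb)).intervalIntegrable

lemma integral_invariantDensity {a b : ℝ} (ha : a ∈ Ioo (-2 : ℝ) 3) (hb : b ∈ Ioo (-2 : ℝ) 3) :
    ∫ x in a..b, invariantDensity x =
      invariantDensityPrimitive b - invariantDensityPrimitive a :=
  integral_eq_sub_of_hasDerivAt
    (fun _ hx => hasDerivAt_invariantDensityPrimitive (ordConnected_Ioo.uIcc_subset ha hb hx))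
    (intervalIntegrable_invariantDensity ha hb)

lemma invariantDensityPrimitive_balance {y : ℝ} (hy : y ∈ Ioo (-2 : ℝ) 3) :
    3 * (invariantDensityPrimitive 1 - invariantDensityPrimitive 0) -
        2 * (invariantDensityPrimitive y - invariantDensityPrimitive 0) +
        (invariantDensityPrimitive (1 - y) - invariantDensityPrimitive 0) =
      (2 + y) * invariantDensity y := by
  have h2 : 2 + y ≠ 0 := by linarith [hy.1]
  have h3 : 3 - y ≠ 0 := by linarith [hy.2]
  simp only [invariantDensityPrimitive, invariantDensity, show (2 : ℝ) + (1 - y) = 3 - y by ring,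
    show (3 : ℝ) - (1 - y) = 2 + y by ring]
  field_simp
  ring

theorem invariant_density_eq (g : ℝ → ℝ)
    (hg : ∀ x : ℝ, g x = 36 * (4 - 3 * x) / ((2 + x) ^ 3 * (3 - x) ^ 2)) :
    ∀ y ∈ Icc (0 : ℝ) 1,
      ∫ x in (0 : ℝ)..1, jumpDensity x y * g x = (2 + y) * g y := by
  intro y hy
  obtain rfl : g = invariantDensity := funext hg
  have hIcc : Icc (0 : ℝ) 1 ⊆ Ioo (-2) 3 := Icc_subset_Ioo (by norm_num) (by norm_num)
  have h0 := hIcc (left_mem_Icc.2 zero_le_one)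
  have h1 := hIcc (right_mem_Icc.2 zero_le_one)
  have h1y := hIcc ⟨sub_nonneg.2 hy.2, sub_le_self 1 hy.1⟩
  rw [integral_jumpDensity_mul (intervalIntegrable_invariantDensity h0 h1) hy,
    integral_invariantDensity h0 h1, integral_invariantDensity h0 (hIcc hy),
    integral_invariantDensity h0 h1y, invariantDensityPrimitive_balance (hIcc hy)]
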